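/- Let U₁ ≠ U₂ be points in ℝ² and let r₁, r₂ be rotations about U₁ and U₂ respectively, each through an irrational multiple of π (hence of infinite order). Then for every P ∈ ℝ², the orbit of P under the group of isometries of ℝ² generated by r₁ and r₂ is dense in ℝ². -/

import Mathlib

/-!
In the complex coordinate `z` of the plane, `rᵢ` is `z ↦ uᵢ + aᵢ (z - uᵢ)` with `|aᵢ| = 1`, and
the commutator `r₂ r₁ r₂⁻¹ r₁⁻¹` is the translation by `w₀ = (1 - a₁) (a₂ - 1) (u₁ - u₂) ≠ 0`.
Conjugating it by `r₁ᵐ` gives the translation by `a₁ᵐ w₀`. As `ρ₁` is irrational the powers of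
`a₁` are dense in the unit circle, so the closure of the additive group of translation vectors of
the translations in the group contains the circle `|z| = |w₀|`, hence the disc `|z| < 2 |w₀|` of
sums of two of its points. An additive subgroup of `ℂ` containing a neighbourhood of `0` is open,
hence closed, hence all of `ℂ`. So the translations of the group are dense, and so is every orbit.
-/

noncomputable section
open Real

abbrev E2 := EuclideanSpace ℝ (Fin 2)

/-- Rotation of the plane about the point `U` through `θ` radians. -/
def rot2 (U : E2) (θ : ℝ) (x : E2) : E2 :=
  U + (EuclideanSpace.equiv (Fin 2) ℝ).symm
    ![Real.cos θ * (x 0 - U 0) - Real.sin θ * (x 1 - U 1),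
      Real.sin θ * (x 0 - U 0) + Real.cos θ * (x 1 - U 1)]

theorem Circle.denseRange_exp_zpow {θ : ℝ} (hθ : Irrational (θ / (2 * π))) :
    DenseRange fun m : ℤ => Circle.exp θ ^ m := by
  have h := AddCircle.homeomorphCircle'.surjective.denseRange.comp
    (AddCircle.denseRange_zsmul_coe_iff.2 hθ) AddCircle.homeomorphCircle'.continuous
  convert h using 1
  funext m
  rw [Function.comp_apply, ← AddCircle.coe_zsmul, AddCircle.homeomorphCircle'_apply_mk,
    Circle.exp_zsmul]

theorem Circle.exp_ne_one_of_irrational {θ : ℝ} (hθ : Irrational (θ / (2 * π))) :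
    Circle.exp θ ≠ 1 := by
  rw [Ne, Circle.exp_eq_one]
  rintro ⟨n, rfl⟩
  exact hθ.ne_int n (by field_simp)

theorem Circle.exists_add_eq_of_norm_le_two {z : ℂ} (hz : ‖z‖ ≤ 2) : ∃ c₁ c₂ : Circle, (c₁ + c₂ : ℂ) = z := by
  set β := Real.arccos (‖z‖ / 2)
  have hcos : Real.cos β = ‖z‖ / 2 :=
    Real.cos_arccos (by linarith [norm_nonneg z]) (by linarith)
  refine ⟨Circle.exp (z.arg + β), Circle.exp (z.arg - β), ?_⟩
  calc (Circle.exp (z.arg + β) + Circle.exp (z.arg - β) : ℂ)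
      = 2 * Real.cos β * Complex.exp (z.arg * Complex.I) := by
        rw [Complex.ofReal_cos, Complex.two_cos]
        simp only [Circle.coe_exp, Complex.ofReal_add, Complex.ofReal_sub, add_mul, sub_mul,
          Complex.exp_add, Complex.exp_sub, neg_mul, Complex.exp_neg]
        ring
    _ = z := by
        rw [hcos]; push_cast; rw [mul_div_cancel₀ _ two_ne_zero, Complex.norm_mul_exp_arg_mul_I]

theorem AddSubgroup.eq_top_of_circle_mul_mem {K : AddSubgroup ℂ} {w : ℂ} (hw : w ≠ 0)
    (hK : ∀ c : Circle, (c : ℂ) * w ∈ K) : K = ⊤ := by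
  have hball : Metric.ball (0 : ℂ) (2 * ‖w‖) ⊆ K := by
    intro z hz
    rw [mem_ball_zero_iff, ← div_lt_iff₀ (norm_pos_iff.2 hw), ← norm_div] at hz
    obtain ⟨c₁, c₂, hc⟩ := Circle.exists_add_eq_of_norm_le_two hz.le
    rw [← div_mul_cancel₀ z hw, ← hc, add_mul]
    exact K.add_mem (hK c₁) (hK c₂)
  have hopen : IsOpen (K : Set ℂ) :=
    K.isOpen_of_mem_nhds (Filter.mem_of_superset (Metric.ball_mem_nhds 0 (by positivity)) hball)
  rw [← AddSubgroup.coe_eq_univ]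
  exact IsClopen.eq_univ ⟨K.isClosed_of_isOpen hopen, hopen⟩ ⟨0, K.zero_mem⟩

theorem AddSubgroup.circle_mul_mem_topologicalClosure {K : AddSubgroup ℂ} {a : Circle}
    (ha : DenseRange fun m : ℤ => a ^ m) {w : ℂ} (hw : ∀ m : ℤ, ((a ^ m : Circle) : ℂ) * w ∈ K)
    (c : Circle) : (c : ℂ) * w ∈ K.topologicalClosure :=
  ha.induction_on c (K.isClosed_topologicalClosure.preimage (by fun_prop))
    fun m => K.le_topologicalClosure (hw m)

def toComplex : E2 ≃ₗᵢ[ℝ] ℂ := Complex.orthonormalBasisOneI.repr.symm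

theorem toComplex_rot2 (U : E2) (θ : ℝ) (x : E2) :
    toComplex (rot2 U θ x) = toComplex U + Circle.exp θ * (toComplex x - toComplex U) := by
  simp only [toComplex, Complex.orthonormalBasisOneI_repr_symm_apply, rot2, Circle.coe_exp,
    Complex.exp_mul_I]
  apply Complex.ext
  · simp
  · simp; ring

def IsRotation (f : E2 ≃ᵢ E2) (c : ℂ) (w : Circle) : Prop :=
  ∀ x, toComplex (f x) = c + w * (toComplex x - c)

def IsTranslation (f : E2 ≃ᵢ E2) (v : ℂ) : Prop :=
  ∀ x, toComplex (f x) = toComplex x + v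

namespace IsTranslation

variable {f g : E2 ≃ᵢ E2} {u v : ℂ}

theorem one : IsTranslation 1 0 := fun x => by simp

theorem mul (hf : IsTranslation f u) (hg : IsTranslation g v) : IsTranslation (f * g) (u + v) :=
  fun x => by rw [IsometryEquiv.mul_apply, hf, hg, add_assoc, add_comm v]

theorem inv (hf : IsTranslation f v) : IsTranslation f⁻¹ (-v) := fun x => by
  rw [eq_add_neg_iff_add_eq, ← hf, IsometryEquiv.apply_inv_self]

end IsTranslation

namespace IsRotation

variable {f g t : E2 ≃ᵢ E2} {c c' v : ℂ} {w w' : Circle}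

theorem one : IsRotation 1 c 1 := fun x => by simp

theorem mul (hf : IsRotation f c w) (hg : IsRotation g c w') : IsRotation (f * g) c (w * w') :=
  fun x => by rw [IsometryEquiv.mul_apply, hf, hg, Circle.coe_mul]; ring

theorem inv (hf : IsRotation f c w) : IsRotation f⁻¹ c w⁻¹ := fun x => by
  have := hf (f⁻¹ x)
  rw [IsometryEquiv.apply_inv_self] at this
  rw [Circle.coe_inv, this]
  field_simp [Circle.coe_ne_zero]
  ring

theorem zpow (hf : IsRotation f c w) (n : ℤ) : IsRotation (f ^ n) c (w ^ n) := by
  induction n using Int.induction_on with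
  | zero => exact one
  | succ n ih => rw [zpow_add_one, zpow_add_one]; exact ih.mul hf
  | pred n ih => rw [zpow_sub_one, zpow_sub_one]; exact ih.mul hf.inv

theorem conj_isTranslation (hg : IsRotation g c w) (ht : IsTranslation t v) :
    IsTranslation (g * t * g⁻¹) (w * v) := fun x => by
  rw [IsometryEquiv.mul_apply, IsometryEquiv.mul_apply, hg, ht, hg.inv, Circle.coe_inv]
  field_simp [Circle.coe_ne_zero]
  ring

theorem commutator_isTranslation (hf : IsRotation f c w) (hg : IsRotation g c' w') :
    IsTranslation (g * f * g⁻¹ * f⁻¹) ((1 - w) * (w' - 1) * (c - c')) := fun x => by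
  simp only [IsometryEquiv.mul_apply, hg _, hf _, hg.inv _, hf.inv _, Circle.coe_inv]
  field_simp [Circle.coe_ne_zero]
  ring

end IsRotation

def translationVectors (G : Subgroup (E2 ≃ᵢ E2)) : AddSubgroup ℂ where
  carrier := {v | ∃ g ∈ G, IsTranslation g v}
  zero_mem' := ⟨1, G.one_mem, IsTranslation.one⟩
  add_mem' := fun ⟨f, hfG, hf⟩ ⟨g, hgG, hg⟩ => ⟨f * g, G.mul_mem hfG hgG, hf.mul hg⟩
  neg_mem' := fun ⟨f, hfG, hf⟩ => ⟨f⁻¹, G.inv_mem hfG, hf.inv⟩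

namespace translationVectors

variable {G : Subgroup (E2 ≃ᵢ E2)} {f g : E2 ≃ᵢ E2} {c c' v : ℂ} {w w' : Circle}

theorem mul_mem_of_isRotation (hg : g ∈ G) (hgr : IsRotation g c w)
    (hv : v ∈ translationVectors G) : (w : ℂ) * v ∈ translationVectors G :=
  let ⟨t, htG, ht⟩ := hv
  ⟨g * t * g⁻¹, G.mul_mem (G.mul_mem hg htG) (G.inv_mem hg), hgr.conj_isTranslation ht⟩

theorem commutator_mem (hf : f ∈ G) (hg : g ∈ G) (hfr : IsRotation f c w)
    (hgr : IsRotation g c' w') : (1 - w) * (w' - 1) * (c - c') ∈ translationVectors G :=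
  ⟨g * f * g⁻¹ * f⁻¹, G.mul_mem (G.mul_mem (G.mul_mem hg hf) (G.inv_mem hg)) (G.inv_mem hf),
    hfr.commutator_isTranslation hgr⟩

end translationVectors

theorem dense_orbit_of_dense_translationVectors {G : Subgroup (E2 ≃ᵢ E2)}
    (hG : Dense (translationVectors G : Set ℂ)) (P : E2) :
    Dense {x : E2 | ∃ f ∈ G, x = f P} := by
  let e : ℂ ≃ₜ E2 := (Homeomorph.addLeft (toComplex P)).trans toComplex.toHomeomorph.symm
  refine (e.surjective.denseRange.dense_image e.continuous hG).mono ?_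
  rintro _ ⟨v, ⟨g, hgG, hg⟩, rfl⟩
  refine ⟨g, hgG, toComplex.injective ?_⟩
  simp [e, hg P]

/-- If `r₁, r₂` are rotations of the plane about distinct points `U₁ ≠ U₂` through
irrational multiples of `π`, then every orbit of the generated group of isometries is
dense in `ℝ²`. -/
theorem stmt_8 (U₁ U₂ : E2) (hU : U₁ ≠ U₂) (ρ₁ ρ₂ : ℝ)
    (h₁ : Irrational ρ₁) (h₂ : Irrational ρ₂) (r₁ r₂ : E2 ≃ᵢ E2)
    (hr₁ : ∀ x, r₁ x = rot2 U₁ (ρ₁ * π) x) (hr₂ : ∀ x, r₂ x = rot2 U₂ (ρ₂ * π) x)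
    (P : E2) :
    Dense {x : E2 | ∃ f ∈ Subgroup.closure {r₁, r₂}, x = f P} := by
  set G := Subgroup.closure {r₁, r₂}
  have hr₁G : r₁ ∈ G := Subgroup.subset_closure (by simp)
  have hr₂G : r₂ ∈ G := Subgroup.subset_closure (by simp)
  have hrot₁ : IsRotation r₁ (toComplex U₁) (Circle.exp (ρ₁ * π)) := fun x => by
    rw [hr₁, toComplex_rot2]
  have hrot₂ : IsRotation r₂ (toComplex U₂) (Circle.exp (ρ₂ * π)) := fun x => by
    rw [hr₂, toComplex_rot2]
  have hirr : ∀ ρ : ℝ, Irrational ρ → Irrational (ρ * π / (2 * π)) := fun ρ h => by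
    rw [show ρ * π / (2 * π) = ρ / (2 : ℕ) by field_simp; norm_num]
    exact h.div_natCast two_ne_zero
  set w₀ := (1 - Circle.exp (ρ₁ * π)) * (Circle.exp (ρ₂ * π) - 1) * (toComplex U₁ - toComplex U₂)
  have hw₀ : w₀ ≠ 0 := by
    have ha := mt Circle.coe_eq_one.1 (Circle.exp_ne_one_of_irrational (hirr _ h₁))
    have hb := mt Circle.coe_eq_one.1 (Circle.exp_ne_one_of_irrational (hirr _ h₂))
    exact mul_ne_zero (mul_ne_zero (sub_ne_zero.2 (Ne.symm ha)) (sub_ne_zero.2 hb))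
      (sub_ne_zero.2 (toComplex.injective.ne hU))
  have hw₀T : ∀ m : ℤ, ((Circle.exp (ρ₁ * π) ^ m : Circle) : ℂ) * w₀ ∈ translationVectors G :=
    fun m => translationVectors.mul_mem_of_isRotation (G.zpow_mem hr₁G m) (hrot₁.zpow m)
      (translationVectors.commutator_mem hr₁G hr₂G hrot₁ hrot₂)
  have htop := AddSubgroup.eq_top_of_circle_mul_mem hw₀
    ((translationVectors G).circle_mul_mem_topologicalClosure
      (Circle.denseRange_exp_zpow (hirr _ h₁)) hw₀T)
  refine dense_orbit_of_dense_translationVectors ?_ P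
  rw [dense_iff_closure_eq, ← AddSubgroup.topologicalClosure_coe, htop, AddSubgroup.coe_top]
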